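/- arXiv:2402.05632 — 2 statements merged into one kernel-verified Lean document; each statement's English description precedes it below -/
import Mathlib

section
/- Let Y_1,…,Y_n be independent real random variables with E(Y_k)=0, E(Y_k²)=σ_k², E(|Y_k|³)<∞ and Σ_{k=1}^n σ_k² = 1. Then for all t ∈ ℝ, |E(e^{itΣ_{k=1}^n Y_k}) − e^{−t²/2}| ≤ (|t|³/6) Σ_{k=1}^n E(|Y_k|³) + (t⁴/8) Σ_{k=1}^n σ_k⁴. -/
/-
By independence the characteristic function of the sum is the product of the φ_k(t) = E e^{itY_k},
and e^{-t²/2} is the product of the e^{-σ_k² t²/2}. All these factors lie in the closed unit disc,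
where |∏ a_k - ∏ b_k| ≤ ∑ |a_k - b_k|. Each difference is split through 1 - σ_k² t²/2:
integrating |e^{ix} - 1 - ix + x²/2| ≤ |x|³/6 at x = tY_k (using E Y_k = 0) gives the cubic term,
and 0 ≤ e^{-u} - (1 - u) ≤ u²/2 at u = σ_k² t²/2 gives the quartic one.
-/

open MeasureTheory ProbabilityTheory Finset Complex ComplexConjugate
open scoped Nat

lemma hasDerivAt_sum_range_succ_I_mul_pow_div_factorial (n : ℕ) (x : ℝ) :
    HasDerivAt (fun y : ℝ => ∑ k ∈ range (n + 1), (I * y) ^ k / (k ! : ℂ))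
      (I * ∑ k ∈ range n, (I * x) ^ k / (k ! : ℂ)) x := by
  induction n with
  | zero => simpa using hasDerivAt_const x (1 : ℂ)
  | succ n ih =>
    have hmono : HasDerivAt (fun z : ℂ => (I * z) ^ (n + 1) / ((n + 1)! : ℂ))
        ((n + 1 : ℕ) * (I * x) ^ n * I / ((n + 1)! : ℂ)) x := by
      simpa using ((hasDerivAt_id (x : ℂ)).const_mul I).fun_pow (n + 1) |>.div_const _
    have hmono' : HasDerivAt (fun y : ℝ => (I * y) ^ (n + 1) / ((n + 1)! : ℂ))
        (I * ((I * x) ^ n / (n ! : ℂ))) x := hmono.comp_ofReal.congr_deriv (by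
      rw [Nat.factorial_succ]
      push_cast
      field_simp)
    rw [sum_range_succ _ n, mul_add]
    simpa only [sum_range_succ _ (n + 1)] using ih.fun_add hmono'

lemma norm_exp_I_mul_sub_sum_le_of_nonneg (n : ℕ) {x : ℝ} (hx : 0 ≤ x) :
    ‖exp (I * x) - ∑ k ∈ range n, (I * x) ^ k / (k ! : ℂ)‖ ≤ x ^ n / n ! := by
  induction n generalizing x with
  | zero => simp [norm_exp_I_mul_ofReal]
  | succ n ih =>
    have hderiv : ∀ s : ℝ, HasDerivAt
        (fun y : ℝ => exp (I * y) - ∑ k ∈ range (n + 1), (I * y) ^ k / (k ! : ℂ))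
        (I * (exp (I * s) - ∑ k ∈ range n, (I * s) ^ k / (k ! : ℂ))) s := by
      intro s
      have hexp := ((hasDerivAt_id (s : ℂ)).const_mul I).cexp.comp_ofReal
      exact (hexp.sub (hasDerivAt_sum_range_succ_I_mul_pow_div_factorial n s)).congr_deriv
        (by simp only [id, mul_one]; ring)
    have hbound : ∀ s : ℝ, HasDerivAt (fun y : ℝ => y ^ (n + 1) / (n + 1)!) (s ^ n / n !) s := by
      intro s
      refine ((hasDerivAt_pow (n + 1) s).div_const ((n + 1)! : ℝ)).congr_deriv ?_
      rw [Nat.factorial_succ]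
      push_cast
      field_simp
    refine image_norm_le_of_norm_deriv_right_le_deriv_boundary (a := 0) (b := x)
      (fun s _ => (hderiv s).continuousAt.continuousWithinAt)
      (fun s _ => (hderiv s).hasDerivWithinAt) (by simp [sum_range_succ']) hbound
      (fun s hs => ?_) ⟨hx, le_rfl⟩
    rw [norm_mul, norm_I, one_mul]
    exact ih hs.1

lemma norm_exp_I_mul_sub_sum_le (n : ℕ) (x : ℝ) :
    ‖exp (I * x) - ∑ k ∈ range n, (I * x) ^ k / (k ! : ℂ)‖ ≤ |x| ^ n / n ! := by
  rcases le_total 0 x with hx | hx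
  · simpa [abs_of_nonneg hx] using norm_exp_I_mul_sub_sum_le_of_nonneg n hx
  · have hconj : exp (I * ↑(-x)) - ∑ k ∈ range n, (I * ↑(-x)) ^ k / (k ! : ℂ)
        = conj (exp (I * x) - ∑ k ∈ range n, (I * x) ^ k / (k ! : ℂ)) := by
      simp [map_sum, ← exp_conj]
    have h := norm_exp_I_mul_sub_sum_le_of_nonneg n (neg_nonneg.2 hx)
    rwa [hconj, RCLike.norm_conj, ← abs_of_nonpos hx] at h

lemma norm_exp_I_mul_sub_taylor_two_le (x : ℝ) :
    ‖exp (I * x) - (1 + I * x - x ^ 2 / 2)‖ ≤ |x| ^ 3 / 6 := by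
  have := norm_exp_I_mul_sub_sum_le 3 x
  convert this using 3
  · simp only [sum_range_succ, sum_range_zero, Nat.factorial, mul_pow, I_sq]
    push_cast
    ring
  · norm_num [Nat.factorial]

lemma Real.abs_exp_neg_sub_one_sub_le {u : ℝ} (hu : 0 ≤ u) :
    |Real.exp (-u) - (1 - u)| ≤ u ^ 2 / 2 := by
  have hlow : 1 - u ≤ Real.exp (-u) := by linarith [Real.add_one_le_exp (-u)]
  have hquad := Real.quadratic_le_exp_of_nonneg hu
  have hmul : Real.exp (-u) * Real.exp u = 1 := by rw [← Real.exp_add]; simp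
  -- (1 - u + u²/2) (1 + u + u²/2) = 1 + u⁴/4 ≥ 1 = e^{-u} e^u
  have hup : Real.exp (-u) ≤ 1 - u + u ^ 2 / 2 := by
    nlinarith [Real.exp_pos (-u), sq_nonneg (u ^ 2)]
  rw [abs_le]; constructor <;> linarith

lemma Finset.norm_prod_sub_prod_le_sum_norm_sub {ι R : Type*} [NormedCommRing R]
    [NormOneClass R] (s : Finset ι) {f g : ι → R} (hf : ∀ i ∈ s, ‖f i‖ ≤ 1)
    (hg : ∀ i ∈ s, ‖g i‖ ≤ 1) :
    ‖∏ i ∈ s, f i - ∏ i ∈ s, g i‖ ≤ ∑ i ∈ s, ‖f i - g i‖ := by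
  induction s using Finset.cons_induction with
  | empty => simp
  | cons i s _ ih =>
    simp only [forall_mem_cons] at hf hg
    have hprod_g : ‖∏ j ∈ s, g j‖ ≤ 1 :=
      (s.norm_prod_le g).trans (prod_le_one (fun _ _ => norm_nonneg _) hg.2)
    rw [prod_cons, prod_cons, sum_cons]
    calc ‖f i * ∏ j ∈ s, f j - g i * ∏ j ∈ s, g j‖
        = ‖(f i - g i) * ∏ j ∈ s, g j + f i * (∏ j ∈ s, f j - ∏ j ∈ s, g j)‖ := by
          congr 1; ring
      _ ≤ ‖f i - g i‖ * ‖∏ j ∈ s, g j‖ + ‖f i‖ * ‖∏ j ∈ s, f j - ∏ j ∈ s, g j‖ :=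
        (norm_add_le _ _).trans (add_le_add (norm_mul_le _ _) (norm_mul_le _ _))
      _ ≤ ‖f i - g i‖ * 1 + 1 * ∑ j ∈ s, ‖f j - g j‖ := by
        gcongr
        exacts [hf.1, ih hf.2 hg.2]
      _ = _ := by ring

section CharacteristicFunction

variable {Ω : Type*} [MeasurableSpace Ω] {μ : Measure Ω}

lemma integral_exp_I_mul_eq_charFun_map {X : Ω → ℝ} (hX : AEMeasurable X μ) (t : ℝ) :
    ∫ ω, exp (I * t * X ω) ∂μ = charFun (μ.map X) t := by
  rw [charFun_apply_real, integral_map hX (by fun_prop)]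
  simp only [mul_comm I, mul_right_comm]

lemma ProbabilityTheory.iIndepFun.integral_exp_I_mul_sum_eq_prod [IsFiniteMeasure μ]
    {ι : Type*} [Fintype ι] {X : ι → Ω → ℝ} (hX : ∀ i, AEMeasurable (X i) μ)
    (hindep : iIndepFun X μ) (t : ℝ) :
    ∫ ω, exp (I * t * ↑(∑ i, X i ω)) ∂μ = ∏ i, ∫ ω, exp (I * t * X i ω) ∂μ := by
  simp only [integral_exp_I_mul_eq_charFun_map (Finset.aemeasurable_fun_sum _ fun i _ => hX i),
    integral_exp_I_mul_eq_charFun_map (hX _), hindep.charFun_map_fun_sum_eq_prod hX,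
    Finset.prod_apply]

lemma integrable_exp_I_mul [IsFiniteMeasure μ] {X : Ω → ℝ} (hX : AEMeasurable X μ) (t : ℝ) :
    Integrable (fun ω => exp (I * t * X ω)) μ :=
  (integrable_const (1 : ℝ)).mono' (by fun_prop)
    (Filter.Eventually.of_forall fun ω => by simp [Complex.norm_exp])

variable [IsProbabilityMeasure μ]

lemma norm_integral_exp_I_mul_le_one (X : Ω → ℝ) (t : ℝ) : ‖∫ ω, exp (I * t * X ω) ∂μ‖ ≤ 1 := by
  simpa using norm_integral_le_of_norm_le_const (μ := μ) (C := 1)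
    (Filter.Eventually.of_forall fun ω => by simp [Complex.norm_exp])

lemma norm_integral_exp_I_mul_sub_taylor_two_le {X : Ω → ℝ} (hX : MemLp X 3 μ) (t : ℝ) :
    ‖∫ ω, exp (I * t * X ω) ∂μ
        - (1 + I * t * ↑(∫ ω, X ω ∂μ) - t ^ 2 / 2 * ↑(∫ ω, X ω ^ 2 ∂μ))‖
      ≤ |t| ^ 3 / 6 * ∫ ω, |X ω| ^ 3 ∂μ := by
  have hX1 : Integrable X μ := hX.integrable (by norm_num)
  have hX2 : Integrable (fun ω => X ω ^ 2) μ :=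
    (hX.mono_exponent (by norm_num : (2 : ENNReal) ≤ 3)).integrable_sq
  have hX3 : Integrable (fun ω => |X ω| ^ 3) μ := by
    simpa using hX.integrable_norm_pow' (p := 3)
  have hpoly : Integrable (fun ω => (1 + I * t * X ω - t ^ 2 / 2 * ↑(X ω ^ 2) : ℂ)) μ :=
    ((integrable_const _).add (hX1.ofReal.const_mul _)).sub (hX2.ofReal.const_mul _)
  have htaylor : ∫ ω, (1 + I * t * X ω - t ^ 2 / 2 * ↑(X ω ^ 2) : ℂ) ∂μ
      = 1 + I * t * ↑(∫ ω, X ω ∂μ) - t ^ 2 / 2 * ↑(∫ ω, X ω ^ 2 ∂μ) := by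
    rw [integral_sub ((integrable_const _).add (hX1.ofReal.const_mul _)) (hX2.ofReal.const_mul _),
      integral_add (integrable_const _) (hX1.ofReal.const_mul _), integral_const_mul,
      integral_const_mul, integral_complex_ofReal, integral_complex_ofReal]
    simp
  rw [← htaylor, ← integral_sub (integrable_exp_I_mul hX.aemeasurable t) hpoly,
    ← integral_const_mul]
  refine norm_integral_le_of_norm_le (hX3.const_mul _) (Filter.Eventually.of_forall fun ω => ?_)
  have hω : exp (I * t * X ω) - (1 + I * t * X ω - t ^ 2 / 2 * ↑(X ω ^ 2))
      = exp (I * ↑(t * X ω)) - (1 + I * ↑(t * X ω) - ↑(t * X ω) ^ 2 / 2) := by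
    push_cast
    ring_nf
  rw [hω]
  calc _ ≤ |t * X ω| ^ 3 / 6 := norm_exp_I_mul_sub_taylor_two_le _
    _ = |t| ^ 3 / 6 * |X ω| ^ 3 := by rw [abs_mul]; ring

lemma norm_integral_exp_I_mul_sub_exp_le {X : Ω → ℝ} (hX : MemLp X 3 μ)
    (hcent : ∫ ω, X ω ∂μ = 0) (t : ℝ) :
    ‖∫ ω, exp (I * t * X ω) ∂μ - ↑(Real.exp (-((∫ ω, X ω ^ 2 ∂μ) * t ^ 2 / 2)))‖
      ≤ |t| ^ 3 / 6 * ∫ ω, |X ω| ^ 3 ∂μ + t ^ 4 / 8 * (∫ ω, X ω ^ 2 ∂μ) ^ 2 := by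
  set σ2 := ∫ ω, X ω ^ 2 ∂μ
  have hu : 0 ≤ σ2 * t ^ 2 / 2 := by
    have : 0 ≤ σ2 := integral_nonneg fun ω => sq_nonneg _
    positivity
  have htaylor := norm_integral_exp_I_mul_sub_taylor_two_le hX t
  rw [hcent, ofReal_zero, mul_zero, add_zero] at htaylor
  have hexp : ‖(1 - t ^ 2 / 2 * σ2 : ℂ) - ↑(Real.exp (-(σ2 * t ^ 2 / 2)))‖
      ≤ t ^ 4 / 8 * σ2 ^ 2 := by
    have h := Real.abs_exp_neg_sub_one_sub_le hu
    rw [abs_sub_comm] at h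
    calc _ = ‖((1 - σ2 * t ^ 2 / 2 - Real.exp (-(σ2 * t ^ 2 / 2)) : ℝ) : ℂ)‖ := by
          congr 1; push_cast; ring
      _ = |1 - σ2 * t ^ 2 / 2 - Real.exp (-(σ2 * t ^ 2 / 2))| := by
          rw [norm_real, Real.norm_eq_abs]
      _ ≤ _ := h.trans_eq (by ring)
  exact (norm_sub_le_norm_sub_add_norm_sub _ _ _).trans (add_le_add htaylor hexp)

end CharacteristicFunction

theorem statement8_general
    {Ω : Type*} [MeasurableSpace Ω] (μ : Measure Ω) [IsProbabilityMeasure μ]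
    (n : ℕ) (Y : Fin n → Ω → ℝ)
    (hindep : iIndepFun Y μ)
    (hL3 : ∀ k, MemLp (Y k) 3 μ)
    (hcent : ∀ k, ∫ ω, Y k ω ∂μ = 0)
    (v : Fin n → ℝ) (hv : ∀ k, ∫ ω, (Y k ω) ^ 2 ∂μ = v k)
    (hsum : ∑ k, v k = 1) :
    ∀ t : ℝ,
      ‖(∫ ω, Complex.exp (Complex.I * (t : ℂ) * ((∑ k, Y k ω : ℝ) : ℂ)) ∂μ)
          - ((Real.exp (-t ^ 2 / 2) : ℝ) : ℂ)‖
        ≤ |t| ^ 3 / 6 * ∑ k, ∫ ω, |Y k ω| ^ 3 ∂μ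
          + t ^ 4 / 8 * ∑ k, (v k) ^ 2 := by
  intro t
  have hgauss : Real.exp (-t ^ 2 / 2) = ∏ k, Real.exp (-(v k * t ^ 2 / 2)) := by
    rw [← Real.exp_sum, sum_neg_distrib, ← sum_div, ← sum_mul, hsum, one_mul, neg_div]
  have hgauss_le_one (k : Fin n) : ‖(Real.exp (-(v k * t ^ 2 / 2)) : ℂ)‖ ≤ 1 := by
    have : 0 ≤ v k := hv k ▸ integral_nonneg fun ω => sq_nonneg _
    rw [norm_real, Real.norm_of_nonneg (Real.exp_pos _).le, Real.exp_le_one_iff, neg_nonpos]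
    positivity
  rw [hindep.integral_exp_I_mul_sum_eq_prod (fun k => (hL3 k).aemeasurable) t, hgauss, ofReal_prod]
  calc _ ≤ ∑ k, ‖∫ ω, exp (I * t * Y k ω) ∂μ - ↑(Real.exp (-(v k * t ^ 2 / 2)))‖ :=
        norm_prod_sub_prod_le_sum_norm_sub _ (g := fun k => (Real.exp (-(v k * t ^ 2 / 2)) : ℂ))
          (fun k _ => norm_integral_exp_I_mul_le_one _ _)
          (fun k _ => hgauss_le_one k)
    _ ≤ ∑ k, (|t| ^ 3 / 6 * ∫ ω, |Y k ω| ^ 3 ∂μ + t ^ 4 / 8 * v k ^ 2) :=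
        sum_le_sum fun k _ => hv k ▸ norm_integral_exp_I_mul_sub_exp_le (hL3 k) (hcent k) t
    _ = _ := by rw [sum_add_distrib, mul_sum, mul_sum]

/-- for independent centered real random variables `Y_1,…,Y_n` with finite
third moments and variances `σ_k²` summing to one, the characteristic function of their sum
satisfies `|E(e^{itΣY_k}) − e^{−t²/2}| ≤ (|t|³/6) Σ E|Y_k|³ + (t⁴/8) Σ σ_k⁴`. -/
theorem statement8
    {Ω : Type*} [MeasurableSpace Ω] (μ : Measure Ω) [IsProbabilityMeasure μ]
    (n : ℕ) (Y : Fin n → Ω → ℝ) (hmeas : ∀ k, Measurable (Y k))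
    (hindep : iIndepFun Y μ)
    (hL3 : ∀ k, MemLp (Y k) 3 μ)
    (hcent : ∀ k, ∫ ω, Y k ω ∂μ = 0)
    (v : Fin n → ℝ) (hv : ∀ k, ∫ ω, (Y k ω) ^ 2 ∂μ = v k)
    (hsum : ∑ k, v k = 1) :
    ∀ t : ℝ,
      ‖(∫ ω, Complex.exp (Complex.I * (t : ℂ) * ((∑ k, Y k ω : ℝ) : ℂ)) ∂μ)
          - ((Real.exp (-t ^ 2 / 2) : ℝ) : ℂ)‖
        ≤ |t| ^ 3 / 6 * ∑ k, ∫ ω, |Y k ω| ^ 3 ∂μ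
          + t ^ 4 / 8 * ∑ k, (v k) ^ 2 :=
  statement8_general μ n Y hindep hL3 hcent v hv hsum
end

section
/- Let θ̂ = (θ̂_1,…,θ̂_{n-1}) be uniformly distributed on the unit sphere S^{n-2} of ℝ^{n-1}. For every m ≥ 1 there exists a constant c_m such that for all n ≥ 2 and all 1 ≤ k ≤ n−1, E| Σ_{ℓ=k}^{n-1} θ̂_ℓ/√(ℓ(ℓ+1)) |^m ≤ c_m n^{-m/2} k^{-m/2}. -/
open MeasureTheory ProbabilityTheory

noncomputable section

/-- The uniform distribution on the unit sphere `S^{m-1}` of `ℝ^m`, realized as the law of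
`ξ / ‖ξ‖` where `ξ` is a standard Gaussian vector of `ℝ^m`. -/
def uniformSphere (m : ℕ) : Measure (EuclideanSpace ℝ (Fin m)) :=
  ((Measure.pi fun _ : Fin m => gaussianReal 0 1).map
      (MeasurableEquiv.toLp 2 (Fin m → ℝ))).map fun x => ‖x‖⁻¹ • x

/-!
Realise `θ̂` as `ξ / ‖ξ‖` with `ξ` a standard Gaussian vector of `ℝ^d`, `d = n - 1`, and write the
sum as `⟪a, θ̂⟫`, where `‖a‖² = Σ_{ℓ ≥ k} 1/(ℓ(ℓ+1)) ≤ 1/k` telescopes. Where `‖ξ‖² > d/2` we have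
`|⟪a, θ̂⟫| ≤ √(2/d) |⟪a, ξ⟫|`, and `⟪a, ξ⟫ ~ N(0, ‖a‖²)` has `m`-th absolute moment
`‖a‖^m E|Z|^m`. Where `‖ξ‖² ≤ d/2` we only use `|⟪a, θ̂⟫| ≤ ‖a‖`, but by the Chernoff bound with
`E e^{-‖ξ‖²} = 3^{-d/2}` this event has probability at most `(e^{1/2}/√3)^d`, which beats
`d^{-m/2}`.
-/

open Real
open scoped RealInnerProductSpace

lemma integral_exp_neg_sq_gaussianReal :
    ∫ x, exp (-x ^ 2) ∂gaussianReal 0 1 = (√3)⁻¹ := by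
  rw [integral_gaussianReal_eq_integral_smul one_ne_zero]
  simp only [gaussianPDFReal_def, smul_eq_mul, mul_assoc, ← exp_add]
  have h : ∀ x : ℝ, -(x - 0) ^ 2 / (2 * ((1 : NNReal) : ℝ)) + -x ^ 2 = -(3 / 2) * x ^ 2 := by
    intro x; push_cast; ring
  simp only [h, integral_const_mul, integral_gaussian]
  rw [show π / (3 / 2) = 2 * π / 3 by ring, sqrt_div' _ (by norm_num : (0:ℝ) ≤ 3)]
  push_cast
  field_simp

lemma exp_half_div_sqrt_three_lt_one : exp (1 / 2) / √3 < 1 := by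
  rw [div_lt_one (by positivity), Real.lt_sqrt (exp_nonneg _), ← exp_nat_mul]
  norm_num
  exact exp_one_lt_d9.trans (by norm_num)

def gaussianAbsMoment (m : ℕ) : ℝ := ∫ x, |x| ^ m ∂gaussianReal 0 1

lemma gaussianAbsMoment_nonneg (m : ℕ) : 0 ≤ gaussianAbsMoment m :=
  integral_nonneg fun _ => by positivity

section StdGaussian

variable {E : Type*} [NormedAddCommGroup E] [InnerProductSpace ℝ E]

lemma abs_inner_inv_norm_smul_pow_le (a x : E) {r : ℝ} (hr : 0 < r) (m : ℕ) :
    |⟪a, ‖x‖⁻¹ • x⟫| ^ m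
      ≤ r⁻¹ ^ m * |⟪a, x⟫| ^ m + {x : E | ‖x‖ ≤ r}.indicator (fun _ => ‖a‖ ^ m) x := by
  rw [real_inner_smul_right, abs_mul, abs_inv, abs_norm]
  by_cases hx : ‖x‖ ≤ r
  · have hcs : ‖x‖⁻¹ * |⟪a, x⟫| ≤ ‖a‖ := by
      rcases eq_or_ne x 0 with rfl | hx0
      · simp
      · rw [inv_mul_le_iff₀ (norm_pos_iff.2 hx0), mul_comm]
        exact abs_real_inner_le_norm a x
    rw [Set.indicator_of_mem (show x ∈ {x : E | ‖x‖ ≤ r} from hx)]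
    have := pow_le_pow_left₀ (by positivity) hcs m
    linarith [show 0 ≤ r⁻¹ ^ m * |⟪a, x⟫| ^ m by positivity]
  · rw [Set.indicator_of_notMem (show x ∉ {x : E | ‖x‖ ≤ r} from hx), add_zero, mul_pow]
    gcongr
    exact (not_le.1 hx).le

variable [FiniteDimensional ℝ E] [MeasurableSpace E] [BorelSpace E]

lemma integral_exp_neg_norm_sq_stdGaussian :
    ∫ x, exp (-‖x‖ ^ 2) ∂stdGaussian E = (√3)⁻¹ ^ Module.finrank ℝ E := by
  rw [stdGaussian, integral_map (Measurable.aemeasurable (by fun_prop)) (by fun_prop)]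
  set b := stdOrthonormalBasis ℝ E
  have h : ∀ y : Fin (Module.finrank ℝ E) → ℝ,
      exp (-‖∑ i, y i • b i‖ ^ 2) = ∏ i, exp (-y i ^ 2) := by
    intro y
    rw [← exp_sum, b.sum_repr_symm (WithLp.toLp 2 y), b.repr.symm.norm_map,
      EuclideanSpace.real_norm_sq_eq, ← Finset.sum_neg_distrib]
  simp only [h]
  rw [integral_fintype_prod_eq_pow (fun x => exp (-x ^ 2)), integral_exp_neg_sq_gaussianReal,
    Fintype.card_fin]

lemma stdGaussian_norm_le_sqrt_le :
    stdGaussian E {x | ‖x‖ ≤ √(Module.finrank ℝ E / 2)}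
      ≤ ENNReal.ofReal ((exp (1 / 2) / √3) ^ Module.finrank ℝ E) := by
  have hint : Integrable (fun x => exp (-1 * ‖x‖ ^ 2)) (stdGaussian E) :=
    Integrable.of_bound (by fun_prop) 1 (Filter.Eventually.of_forall fun x => by
      rw [norm_of_nonneg (exp_nonneg _), exp_le_one_iff]; nlinarith [sq_nonneg ‖x‖])
  have chernoff := measure_le_le_exp_mul_mgf (X := fun x : E => ‖x‖ ^ 2)
    (Module.finrank ℝ E / 2 : ℝ) (by norm_num : (-1 : ℝ) ≤ 0) hint
  simp only [mgf, neg_mul, one_mul, neg_neg, integral_exp_neg_norm_sq_stdGaussian] at chernoff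
  have hset : {x : E | ‖x‖ ≤ √(Module.finrank ℝ E / 2)}
      = {x | ‖x‖ ^ 2 ≤ Module.finrank ℝ E / 2} := by
    ext x; exact Real.le_sqrt (norm_nonneg x) (by positivity)
  rw [hset, ← ofReal_measureReal]
  refine ENNReal.ofReal_le_ofReal (chernoff.trans_eq ?_)
  rw [div_pow, div_eq_mul_inv, inv_pow, ← exp_nat_mul]
  ring_nf

lemma map_inner_stdGaussian (a : E) :
    (stdGaussian E).map (fun x => ⟪a, x⟫) = gaussianReal 0 (‖a‖₊ ^ 2) := by
  have h := IsGaussian.map_eq_gaussianReal (μ := stdGaussian E) (innerSL ℝ a)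
  rw [integral_strongDual_stdGaussian, variance_dual_stdGaussian, innerSL_apply_norm] at h
  convert h using 2
  · rfl
  · rw [← NNReal.coe_inj]
    simp

lemma lintegral_abs_inner_pow_stdGaussian (a : E) (m : ℕ) :
    ∫⁻ x, ENNReal.ofReal (|⟪a, x⟫| ^ m) ∂stdGaussian E
      = ENNReal.ofReal (‖a‖ ^ m * gaussianAbsMoment m) := by
  have hmap : (stdGaussian E).map (fun x => ⟪a, x⟫) = (gaussianReal 0 1).map (‖a‖ * ·) := by
    rw [map_inner_stdGaussian, gaussianReal_map_const_mul]
    congr 1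
    · simp
    · ext; simp
  have hint : Integrable (fun z : ℝ => |z| ^ m) (gaussianReal 0 1) :=
    (memLp_id_gaussianReal (m : NNReal)).integrable_norm_pow'
  calc ∫⁻ x, ENNReal.ofReal (|⟪a, x⟫| ^ m) ∂stdGaussian E
      = ∫⁻ y, ENNReal.ofReal (|y| ^ m) ∂(stdGaussian E).map (fun x => ⟪a, x⟫) :=
        (lintegral_map (f := fun y : ℝ => ENNReal.ofReal (|y| ^ m)) (by fun_prop)
          (by fun_prop)).symm
    _ = ∫⁻ z, ENNReal.ofReal (|‖a‖ * z| ^ m) ∂gaussianReal 0 1 := by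
        rw [hmap, lintegral_map (by fun_prop) (by fun_prop)]
    _ = ENNReal.ofReal (‖a‖ ^ m * gaussianAbsMoment m) := by
        simp_rw [abs_mul, abs_norm, mul_pow]
        rw [← ofReal_integral_eq_lintegral_ofReal (hint.const_mul _)
          (Filter.Eventually.of_forall fun _ => by positivity), integral_const_mul,
          gaussianAbsMoment]

theorem lintegral_abs_inner_inv_norm_smul_pow_le (hd : 0 < Module.finrank ℝ E) (a : E) (m : ℕ) :
    ∫⁻ x, ENNReal.ofReal (|⟪a, ‖x‖⁻¹ • x⟫| ^ m) ∂stdGaussian E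
      ≤ ENNReal.ofReal (‖a‖ ^ m * ((√(Module.finrank ℝ E / 2))⁻¹ ^ m * gaussianAbsMoment m
          + (exp (1 / 2) / √3) ^ Module.finrank ℝ E)) := by
  set r := √(Module.finrank ℝ E / 2)
  have hr : 0 < r := Real.sqrt_pos.2 (by positivity)
  set S := {x : E | ‖x‖ ≤ r}
  have hS : MeasurableSet S := measurableSet_le (by fun_prop) measurable_const
  calc ∫⁻ x, ENNReal.ofReal (|⟪a, ‖x‖⁻¹ • x⟫| ^ m) ∂stdGaussian E
      ≤ ∫⁻ x, ENNReal.ofReal (r⁻¹ ^ m) * ENNReal.ofReal (|⟪a, x⟫| ^ m)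
          + S.indicator (fun _ => ENNReal.ofReal (‖a‖ ^ m)) x ∂stdGaussian E := by
        refine lintegral_mono fun x => ?_
        rw [← ENNReal.ofReal_mul (by positivity),
          ← congr_fun (Set.comp_indicator_const _ ENNReal.ofReal ENNReal.ofReal_zero) x]
        exact (ENNReal.ofReal_le_ofReal (abs_inner_inv_norm_smul_pow_le a x hr m)).trans
          ENNReal.ofReal_add_le
    _ = ENNReal.ofReal (r⁻¹ ^ m) * ENNReal.ofReal (‖a‖ ^ m * gaussianAbsMoment m)
          + ENNReal.ofReal (‖a‖ ^ m) * stdGaussian E S := by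
        rw [lintegral_add_left (by fun_prop), lintegral_const_mul _ (by fun_prop),
          lintegral_abs_inner_pow_stdGaussian, lintegral_indicator_const hS]
    _ ≤ ENNReal.ofReal (r⁻¹ ^ m) * ENNReal.ofReal (‖a‖ ^ m * gaussianAbsMoment m)
          + ENNReal.ofReal (‖a‖ ^ m)
            * ENNReal.ofReal ((exp (1 / 2) / √3) ^ Module.finrank ℝ E) := by
        gcongr
        exact stdGaussian_norm_le_sqrt_le
    _ = _ := by
        have := gaussianAbsMoment_nonneg m
        rw [← ENNReal.ofReal_mul (by positivity), ← ENNReal.ofReal_mul (by positivity),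
          ← ENNReal.ofReal_add (by positivity) (by positivity)]
        ring_nf

end StdGaussian

lemma uniformSphere_eq_map_stdGaussian (d : ℕ) :
    uniformSphere d = (stdGaussian (EuclideanSpace ℝ (Fin d))).map fun x => ‖x‖⁻¹ • x := by
  rw [uniformSphere, MeasurableEquiv.coe_toLp, map_pi_eq_stdGaussian]

-- Coordinate `i` is the paper's index `ℓ = i + 1`: the entries are `1/√(ℓ(ℓ+1))` for `ℓ ≥ k`.
def tailCoeffs (d k : ℕ) : EuclideanSpace ℝ (Fin d) :=
  WithLp.toLp 2 fun i =>
    if k ≤ (i : ℕ) + 1 then (√((((i : ℕ) : ℝ) + 1) * (((i : ℕ) : ℝ) + 2)))⁻¹ else 0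

lemma sum_ite_div_sqrt_eq_inner_tailCoeffs (d k : ℕ) (y : EuclideanSpace ℝ (Fin d)) :
    ∑ i : Fin d, (if k ≤ (i : ℕ) + 1 then
        y i / √((((i : ℕ) : ℝ) + 1) * (((i : ℕ) : ℝ) + 2)) else 0)
      = ⟪tailCoeffs d k, y⟫ := by
  simp only [tailCoeffs, PiLp.inner_apply, RCLike.inner_apply, conj_trivial]
  refine Finset.sum_congr rfl fun i _ => ?_
  split_ifs <;> simp [div_eq_mul_inv]

lemma sum_Ico_inv_mul_succ {j d : ℕ} (h : j ≤ d) :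
    ∑ i ∈ Finset.Ico j d, (((i : ℝ) + 1) * ((i : ℝ) + 2))⁻¹
      = ((j : ℝ) + 1)⁻¹ - ((d : ℝ) + 1)⁻¹ := by
  induction d, h using Nat.le_induction with
  | base => simp
  | succ d hjd ih =>
    rw [Finset.sum_Ico_succ_top hjd, ih]
    push_cast
    field_simp
    ring

lemma norm_tailCoeffs_sq_le {d k : ℕ} (hk : 1 ≤ k) : ‖tailCoeffs d k‖ ^ 2 ≤ (k : ℝ)⁻¹ := by
  have hsq : ∀ i : ℕ,
      ((√(((i : ℝ) + 1) * ((i : ℝ) + 2)))⁻¹) ^ 2 = (((i : ℝ) + 1) * ((i : ℝ) + 2))⁻¹ := fun i => by rw [inv_pow, sq_sqrt (by positivity)]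
  rw [EuclideanSpace.real_norm_sq_eq]
  simp only [tailCoeffs, PiLp.toLp_apply, ite_pow, hsq, ne_eq, OfNat.ofNat_ne_zero,
    not_false_eq_true, zero_pow]
  rw [Fin.sum_univ_eq_sum_range (fun i => if k ≤ i + 1 then (((i : ℝ) + 1) * ((i : ℝ) + 2))⁻¹
    else 0), ← Finset.sum_filter]
  have hfilter : (Finset.range d).filter (fun i => k ≤ i + 1) = Finset.Ico (k - 1) d := by
    ext i; simp only [Finset.mem_filter, Finset.mem_range, Finset.mem_Ico]; omega
  rw [hfilter]
  rcases le_or_gt (k - 1) d with hkd | hkd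
  · rw [sum_Ico_inv_mul_succ hkd, Nat.cast_sub hk]
    simp only [Nat.cast_one, sub_add_cancel, sub_le_self_iff, inv_nonneg]
    positivity
  · rw [Finset.Ico_eq_empty_of_le hkd.le, Finset.sum_empty]
    positivity

lemma norm_tailCoeffs_mul_sqrt_le_one {d k : ℕ} (hk : 1 ≤ k) : ‖tailCoeffs d k‖ * √k ≤ 1 := by
  refine (pow_le_one_iff_of_nonneg (by positivity) two_ne_zero).1 ?_
  rw [mul_pow, sq_sqrt (Nat.cast_nonneg k)]
  calc ‖tailCoeffs d k‖ ^ 2 * k ≤ (k : ℝ)⁻¹ * k := by gcongr; exact norm_tailCoeffs_sq_le hk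
    _ = 1 := inv_mul_cancel₀ (by positivity)

lemma sqrt_pow_mul_add_pow_le {m n d : ℕ} {M ρ B : ℝ} (hn : 1 ≤ n) (hnd : n ≤ 2 * d) (hM : 0 ≤ M)
    (hρ : 0 ≤ ρ) (hB : ∀ j : ℕ, (j : ℝ) ^ m * ρ ^ j ≤ B) :
    √n ^ m * ((√(d / 2))⁻¹ ^ m * M + ρ ^ d) ≤ 2 ^ m * (M + B) := by
  have hn' : (1 : ℝ) ≤ n := by exact_mod_cast hn
  have hnd' : (n : ℝ) ≤ 2 * d := by exact_mod_cast hnd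
  have hscale : √n * (√(d / 2))⁻¹ ≤ 2 := by
    have hd : (0 : ℝ) < d := by linarith
    rw [← sqrt_inv, ← sqrt_mul (by positivity), sqrt_le_left zero_le_two,
      ← div_eq_mul_inv, div_le_iff₀ (by positivity)]
    linarith
  have htail : √n ^ m * ρ ^ d ≤ 2 ^ m * B := by
    calc √n ^ m * ρ ^ d ≤ (2 * d) ^ m * ρ ^ d := by
          gcongr
          exact ((sqrt_le_left (by positivity)).2 (by nlinarith)).trans hnd'
      _ = 2 ^ m * ((d : ℝ) ^ m * ρ ^ d) := by ring
      _ ≤ 2 ^ m * B := by gcongr; exact hB d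
  calc √n ^ m * ((√(d / 2))⁻¹ ^ m * M + ρ ^ d)
      = (√n * (√(d / 2))⁻¹) ^ m * M + √n ^ m * ρ ^ d := by ring
    _ ≤ 2 ^ m * M + 2 ^ m * B := by gcongr
    _ = 2 ^ m * (M + B) := by ring

/-- bound (3.27): for `θ̂` uniform on the sphere `S^{n-2}` of `ℝ^{n-1}`
(coordinates `θ̂_1,…,θ̂_{n-1}`), for every `m ≥ 1` there is `c_m` such that for all `n ≥ 2`
and all `1 ≤ k ≤ n−1`, `E|Σ_{ℓ=k}^{n-1} θ̂_ℓ/√(ℓ(ℓ+1))|^m ≤ c_m n^{-m/2} k^{-m/2}`. -/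
theorem statement14 :
    ∀ m : ℕ, 1 ≤ m → ∃ c : ℝ, 0 < c ∧ ∀ n : ℕ, 2 ≤ n → ∀ k : ℕ, 1 ≤ k → k ≤ n - 1 →
      ∫⁻ x, ENNReal.ofReal
          (|∑ i : Fin (n - 1), if k ≤ (i : ℕ) + 1 then
              x i / Real.sqrt ((((i : ℕ) : ℝ) + 1) * (((i : ℕ) : ℝ) + 2)) else 0| ^ m)
          ∂(uniformSphere (n - 1))
        ≤ ENNReal.ofReal (c / ((n : ℝ) ^ ((m : ℝ) / 2) * (k : ℝ) ^ ((m : ℝ) / 2))) := by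
  intro m _
  set ρ := exp (1 / 2) / √3
  obtain ⟨B, hB⟩ : ∃ B, ∀ j : ℕ, (j : ℝ) ^ m * ρ ^ j ≤ B := by
    obtain ⟨B, hB⟩ := (tendsto_pow_const_mul_const_pow_of_lt_one m (by positivity)
      exp_half_div_sqrt_three_lt_one).bddAbove_range
    exact ⟨B, fun j => hB (Set.mem_range_self j)⟩
  have hB0 : 0 < B := (by positivity : 0 < ρ).trans_le (by simpa using hB 1)
  have hM := gaussianAbsMoment_nonneg m
  refine ⟨2 ^ m * (gaussianAbsMoment m + B), by positivity, fun n hn k hk hkn => ?_⟩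
  set a := tailCoeffs (n - 1) k
  have hd : 0 < Module.finrank ℝ (EuclideanSpace ℝ (Fin (n - 1))) := by
    rw [finrank_euclideanSpace_fin]; omega
  simp_rw [sum_ite_div_sqrt_eq_inner_tailCoeffs, uniformSphere_eq_map_stdGaussian]
  rw [lintegral_map (by fun_prop) (by fun_prop)]
  refine (lintegral_abs_inner_inv_norm_smul_pow_le hd a m).trans (ENNReal.ofReal_le_ofReal ?_)
  rw [finrank_euclideanSpace_fin, rpow_div_two_eq_sqrt _ (Nat.cast_nonneg n),
    rpow_div_two_eq_sqrt _ (Nat.cast_nonneg k), rpow_natCast, rpow_natCast,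
    le_div_iff₀ (by positivity)]
  calc ‖a‖ ^ m * ((√((n - 1 : ℕ) / 2))⁻¹ ^ m * gaussianAbsMoment m + ρ ^ (n - 1))
        * (√n ^ m * √k ^ m)
      = (‖a‖ * √k) ^ m * (√n ^ m * ((√((n - 1 : ℕ) / 2))⁻¹ ^ m * gaussianAbsMoment m
          + ρ ^ (n - 1))) := by ring
    _ ≤ 1 ^ m * (2 ^ m * (gaussianAbsMoment m + B)) :=
        mul_le_mul (pow_le_pow_left₀ (by positivity) (norm_tailCoeffs_mul_sqrt_le_one hk) m)
          (sqrt_pow_mul_add_pow_le (by omega) (by omega) hM (by positivity) hB)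
          (by positivity) (by positivity)
    _ = 2 ^ m * (gaussianAbsMoment m + B) := by ring
end
end
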